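/- arXiv:1505.00534 — 2 statements merged into one kernel-verified Lean document; each statement's English description precedes it below -/
import Mathlib

section
/- Define b(a,b,c,d) = (1/2)(1 + ⟨ν(a,d), ν(b,c)⟩) for boundary points with a ≠ d and b ≠ c. Then for pairwise distinct boundary points a, b, c, d one has the cocycle identity ν(a,d) = b(d,b,c,a)·ν(a,b) + b(a,b,c,d)·ν(a,c). -/
noncomputable section

/-- Vectors of Minkowski space `ℝ^{2,1}`. -/
abbrev V3 := Fin 3 → ℝ

/-- The Minkowski bilinear form of signature (2,1), given by `diag(1,1,-1)`. -/
def mink (v w : V3) : ℝ := v 0 * w 0 + v 1 * w 1 - v 2 * w 2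

/-- The Minkowski cross product: `⟨crossM a b, c⟩ = det(a,b,c)`. -/
def crossM (a b : V3) : V3 :=
  ![a 1 * b 2 - a 2 * b 1, a 2 * b 0 - a 0 * b 2, -(a 0 * b 1 - a 1 * b 0)]

/-- The neutral vector `ν(a,b)`: the unit spacelike vector orthogonal to the
oriented geodesic plane spanned by the null vectors `a` and `b`, oriented so that
for `a = (0,-1,1)`, `b = (0,1,1)` we get `ν(a,b) = (1,0,0)`. -/
def nu (a b : V3) : V3 :=
  (Real.sqrt (mink (crossM b a) (crossM b a)))⁻¹ • crossM b a

/-- A future-pointing null vector, representing a boundary point of `ℍ`. -/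
def FutureNull (v : V3) : Prop := mink v v = 0 ∧ 0 < v 2

/-- Two null vectors represent distinct boundary points iff they are not proportional. -/
def DistinctRays (a b : V3) : Prop := ¬ ∃ t : ℝ, b = t • a

/-- The cross-ratio `b(a,b,c,d) = (1/2)(1 + ⟨ν(a,d), ν(b,c)⟩)`. -/
def bcr (a b c d : V3) : ℝ := (1 + mink (nu a d) (nu b c)) / 2

/-! Three pairwise distinct future null rays `a, b, c` have Gram matrix
`[[0,A,B],[A,0,C],[B,C,0]]` with `A = ⟨a,b⟩`, `B = ⟨a,c⟩`, `C = ⟨b,c⟩` all negative, hence of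
nonzero determinant `2ABC`; so they form a basis and `d = α a + β b + γ c`. Since `x ↦ x × a`
kills `a`, `d × a = β (b × a) + γ (c × a)`, while `ν(a,x) = (x × a) / |⟨a,x⟩|`. The Lagrange
identity `⟨p × q, r × s⟩ = ⟨p,s⟩⟨q,r⟩ - ⟨p,r⟩⟨q,s⟩` evaluates the two cross-ratios to `β A / D`
and `γ B / D` with `D = ⟨a,d⟩`, which are exactly the required coefficients. -/

lemma mink_comm (v w : V3) : mink v w = mink w v := by
  unfold mink; ring

lemma mink_add_left (u v w : V3) : mink (u + v) w = mink u w + mink v w := by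
  simp only [mink, Pi.add_apply]; ring

lemma mink_smul_left (t : ℝ) (v w : V3) : mink (t • v) w = t * mink v w := by
  simp only [mink, Pi.smul_apply, smul_eq_mul]; ring

lemma mink_smul_right (t : ℝ) (v w : V3) : mink v (t • w) = t * mink v w := by
  rw [mink_comm, mink_smul_left, mink_comm]

lemma mink_zero_left (v : V3) : mink 0 v = 0 := by
  simp [mink]

theorem FutureNull.mink_lt_zero {a b : V3} (ha : FutureNull a) (hb : FutureNull b)
    (hab : DistinctRays a b) : mink a b < 0 := by
  obtain ⟨ha0, ha2⟩ := ha
  obtain ⟨hb0, hb2⟩ := hb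
  unfold mink at *
  by_contra! hle
  -- equality in Cauchy–Schwarz for the spatial parts forces `b` to be a multiple of `a`
  refine hab ⟨b 2 / a 2, ?_⟩
  have lagrange : (a 0 * b 0 + a 1 * b 1) ^ 2 + (a 0 * b 1 - a 1 * b 0) ^ 2 = (a 2 * b 2) ^ 2 := by
    linear_combination (b 0 * b 0 + b 1 * b 1) * ha0 + a 2 * a 2 * hb0
  have hq : a 0 * b 1 - a 1 * b 0 = 0 := by nlinarith [mul_pos ha2 hb2]
  have hp : a 0 * b 0 + a 1 * b 1 = a 2 * b 2 := by nlinarith [mul_pos ha2 hb2]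
  ext i
  fin_cases i <;>
    simp only [Pi.smul_apply, smul_eq_mul, Fin.isValue, Fin.zero_eta, Fin.mk_one,
      Fin.reduceFinMk] <;>
    field_simp <;> apply mul_left_cancel₀ ha2.ne'
  · linear_combination a 0 * hp - a 1 * hq - b 0 * ha0
  · linear_combination a 1 * hp + a 0 * hq - b 1 * ha0

lemma crossM_add_left (u v w : V3) : crossM (u + v) w = crossM u w + crossM v w := by
  ext i
  fin_cases i <;> simp only [crossM, Pi.add_apply, Fin.isValue, Fin.zero_eta, Fin.mk_one, Fin.reduceFinMk, Matrix.cons_val_zero,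
    Matrix.cons_val_one, Matrix.cons_val] <;> ring

lemma crossM_smul_left (t : ℝ) (v w : V3) : crossM (t • v) w = t • crossM v w := by
  ext i
  fin_cases i <;> simp only [crossM, Pi.smul_apply, smul_eq_mul, Fin.isValue, Fin.zero_eta, Fin.mk_one, Fin.reduceFinMk, Matrix.cons_val_zero,
    Matrix.cons_val_one, Matrix.cons_val] <;> ring

lemma crossM_self (v : V3) : crossM v v = 0 := by
  ext i
  fin_cases i <;> simp only [crossM, Pi.zero_apply, Fin.isValue, Fin.zero_eta, Fin.mk_one, Fin.reduceFinMk, Matrix.cons_val_zero,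
    Matrix.cons_val_one, Matrix.cons_val] <;> ring

lemma mink_crossM_crossM (a b c d : V3) :
    mink (crossM a b) (crossM c d) = mink a d * mink b c - mink a c * mink b d := by
  simp only [mink, crossM, Fin.isValue, Matrix.cons_val_zero, Matrix.cons_val_one,
    Matrix.cons_val]
  ring

lemma nu_eq_of_mink_lt_zero {a b : V3} (ha : mink a a = 0) (hab : mink a b < 0) :
    nu a b = (-mink a b)⁻¹ • crossM b a := by
  rw [nu, mink_crossM_crossM, ha, mink_comm b a, mul_zero, sub_zero, ← sq,
    Real.sqrt_sq_eq_abs, abs_of_neg hab]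

lemma bcr_eq_of_mink_lt_zero {a b c d : V3} (ha : mink a a = 0) (hb : mink b b = 0)
    (had : mink a d < 0) (hbc : mink b c < 0) :
    bcr a b c d =
      (1 + (mink d b * mink a c - mink d c * mink a b) / (mink a d * mink b c)) / 2 := by
  rw [bcr, nu_eq_of_mink_lt_zero ha had, nu_eq_of_mink_lt_zero hb hbc, mink_smul_left,
    mink_smul_right, mink_crossM_crossM]
  field_simp

section NullTriple

variable {a b c : V3} (ha : mink a a = 0) (hb : mink b b = 0) (hc : mink c c = 0)
  (hab : mink a b ≠ 0) (hac : mink a c ≠ 0) (hbc : mink b c ≠ 0)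
include ha hb hc hab hac hbc

lemma linearIndependent_of_mink_ne_zero : LinearIndependent ℝ ![a, b, c] := by
  rw [Fintype.linearIndependent_iff]
  intro g hg
  simp only [Fin.sum_univ_three, Matrix.cons_val_zero, Matrix.cons_val_one,
    Matrix.cons_val_two, Matrix.tail_cons, Matrix.head_cons] at hg
  have pair (v : V3) : g 0 * mink a v + g 1 * mink b v + g 2 * mink c v = 0 := by
    simpa [mink_add_left, mink_smul_left, mink_zero_left] using congrArg (mink · v) hg
  have hga := pair a
  have hgb := pair b
  have hgc := pair c
  rw [ha, mink_comm b a, mink_comm c a] at hga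
  rw [hb, mink_comm c b] at hgb
  rw [hc] at hgc
  have h2 : g 2 = 0 := by
    have : g 2 * (2 * mink a c * mink b c) = 0 := by
      linear_combination mink b c * hga + mink a c * hgb - mink a b * hgc
    simpa [hac, hbc] using this
  have h1 : g 1 = 0 := by
    simpa [h2, hab] using hga
  have h0 : g 0 = 0 := by
    simpa [h2, hab] using hgb
  intro i
  fin_cases i <;> assumption

lemma exists_eq_smul_add_smul_add_smul (d : V3) :
    ∃ α β γ : ℝ, d = α • a + β • b + γ • c := by
  have hspan := (linearIndependent_of_mink_ne_zero ha hb hc hab hac hbc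
    ).span_eq_top_of_card_eq_finrank (by simp)
  have hd : d ∈ Submodule.span ℝ (Set.range ![a, b, c]) := hspan ▸ Submodule.mem_top
  obtain ⟨g, hg⟩ := (Submodule.mem_span_range_iff_exists_fun ℝ).mp hd
  refine ⟨g 0, g 1, g 2, ?_⟩
  rw [← hg, Fin.sum_univ_three]
  rfl

end NullTriple

lemma nu_eq_bcr_smul_add_bcr_smul_of_eq {a b c d : V3} {α β γ : ℝ}
    (ha : mink a a = 0) (hb : mink b b = 0) (hc : mink c c = 0) (hd : mink d d = 0)
    (hab : mink a b < 0) (hac : mink a c < 0) (had : mink a d < 0) (hbc : mink b c < 0)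
    (hdecomp : d = α • a + β • b + γ • c) :
    nu a d = bcr d b c a • nu a b + bcr a b c d • nu a c := by
  have expand (v : V3) : mink d v = α * mink a v + β * mink b v + γ * mink c v := by
    rw [hdecomp, mink_add_left, mink_add_left, mink_smul_left, mink_smul_left, mink_smul_left]
  have hD : mink a d = β * mink a b + γ * mink a c := by
    rw [mink_comm, expand, ha, mink_comm b a, mink_comm c a]; ring
  have hcross : crossM d a = β • crossM b a + γ • crossM c a := by
    rw [hdecomp, crossM_add_left, crossM_add_left, crossM_smul_left, crossM_smul_left,
      crossM_smul_left, crossM_self, smul_zero, zero_add]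
  have hbcr₁ : bcr a b c d = γ * mink a c / mink a d := by
    rw [bcr_eq_of_mink_lt_zero ha hb had hbc, expand, expand, hb, hc, mink_comm c b]
    field_simp [had.ne, hbc.ne]
    linear_combination mink b c * hD
  have hbcr₂ : bcr d b c a = β * mink a b / mink a d := by
    rw [bcr_eq_of_mink_lt_zero hd hb (mink_comm a d ▸ had) hbc, expand, expand, hb, hc,
      mink_comm c b, mink_comm d a]
    field_simp [had.ne, hbc.ne]
    linear_combination mink b c * hD
  rw [hbcr₁, hbcr₂, nu_eq_of_mink_lt_zero ha had, nu_eq_of_mink_lt_zero ha hab,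
    nu_eq_of_mink_lt_zero ha hac, hcross]
  match_scalars <;> field_simp [had.ne, hab.ne, hac.ne]

theorem nu_decomposition_general (a b c d : V3)
    (ha : FutureNull a) (hb : FutureNull b) (hc : FutureNull c) (hd : FutureNull d)
    (hab : DistinctRays a b) (hac : DistinctRays a c) (had : DistinctRays a d)
    (hbc : DistinctRays b c) :
    nu a d = bcr d b c a • nu a b + bcr a b c d • nu a c := by
  have nab := ha.mink_lt_zero hb hab
  have nac := ha.mink_lt_zero hc hac
  have nad := ha.mink_lt_zero hd had
  have nbc := hb.mink_lt_zero hc hbc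
  obtain ⟨α, β, γ, hdecomp⟩ :=
    exists_eq_smul_add_smul_add_smul ha.1 hb.1 hc.1 nab.ne nac.ne nbc.ne d
  exact nu_eq_bcr_smul_add_bcr_smul_of_eq ha.1 hb.1 hc.1 hd.1 nab nac nad nbc hdecomp

/-- the identity `ν(a,d) = b(d,b,c,a)·ν(a,b) + b(a,b,c,d)·ν(a,c)`
for pairwise distinct boundary points. -/
theorem nu_decomposition (a b c d : V3)
    (ha : FutureNull a) (hb : FutureNull b) (hc : FutureNull c) (hd : FutureNull d)
    (hab : DistinctRays a b) (hac : DistinctRays a c) (had : DistinctRays a d)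
    (hbc : DistinctRays b c) (hbd : DistinctRays b d) (hcd : DistinctRays c d) :
    nu a d = bcr d b c a • nu a b + bcr a b c d • nu a c :=
  nu_decomposition_general a b c d ha hb hc hd hab hac had hbc
end
end

section
/- Let k: R × X → R (for X a set with a map φ: R × X → X satisfying φ_t∘φ_s = φ_{t+s}) satisfy the additive cocycle identity k_{t+t'}(x) = k_t(φ_{t'} x) + k_{t'}(x) for all t, t' ∈ R and x ∈ X, with each t ↦ k_t(x) continuous. Fix r > 0 and define K_t(x) = log( ∫_t^{r+t} exp(k_s(x)) ds / ∫_0^r exp(k_s(x)) ds ). Then K also satisfies the cocycle identity K_{t+t'}(x) = K_t(φ_{t'} x) + K_{t'}(x), and moreover ∂/∂t|_{t=0} K_t(x) = (exp(k_r(x)) − exp(k_0(x))) / ∫_0^r exp(k_s(x)) ds. -/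
/-!
Writing `F_x(t) = ∫_t^{r+t} e^{k_s(x)} ds`, the cocycle identity gives
`e^{k_s(φ_{t'} x)} = e^{-k_{t'}(x)} e^{k_{s+t'}(x)}`, so after the substitution `s ↦ s + t'`,
`log F_{φ_{t'} x}(t) = log F_x(t + t') - k_{t'}(x)`. In `K_t(x) = log F_x(t) - log F_x(0)` the
two correction terms `k_{t'}(x)` cancel, so `K` is again a cocycle, while the derivative at `0`
is `F_x'(0) / F_x(0)` with `F_x'(0) = e^{k_r(x)} - e^{k_0(x)}` by the fundamental theorem of
calculus at both endpoints.
-/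

noncomputable section

open MeasureTheory

def IsAddCocycle {G X A : Type*} [Add G] [Add A] (φ : G → X → X) (k : G → X → A) : Prop :=
  ∀ (t t' : G) (x : X), k (t + t') x = k t (φ t' x) + k t' x

theorem isAddCocycle_sub_apply_zero {G X A : Type*} [AddMonoid G] [AddCommGroup A]
    {φ : G → X → X} {L : G → X → A} (c : G → X → A)
    (hL : ∀ (t t' : G) (x : X), L t (φ t' x) = L (t + t') x - c t' x) :
    IsAddCocycle φ fun t x => L t x - L 0 x := by
  intro t t' x
  simp only [hL, zero_add]
  abel

namespace IsAddCocycle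

variable {X : Type*} {φ : ℝ → X → X} {k : ℝ → X → ℝ}

theorem exp_apply_flow (hk : IsAddCocycle φ k) (s t' : ℝ) (x : X) :
    Real.exp (k s (φ t' x)) = Real.exp (-k t' x) * Real.exp (k (s + t') x) := by
  rw [← Real.exp_add, hk s t' x]
  ring_nf

theorem integral_exp_apply_flow (hk : IsAddCocycle φ k) (a b t' : ℝ) (x : X) :
    ∫ s in a..b, Real.exp (k s (φ t' x)) =
      Real.exp (-k t' x) * ∫ s in (a + t')..(b + t'), Real.exp (k s x) := by
  simp only [hk.exp_apply_flow, intervalIntegral.integral_const_mul,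
    intervalIntegral.integral_comp_add_right fun s => Real.exp (k s x)]

theorem log_integral_exp_apply_flow (hk : IsAddCocycle φ k) (a b t' : ℝ) (x : X)
    (hne : ∫ s in (a + t')..(b + t'), Real.exp (k s x) ≠ 0) :
    Real.log (∫ s in a..b, Real.exp (k s (φ t' x))) =
      Real.log (∫ s in (a + t')..(b + t'), Real.exp (k s x)) - k t' x := by
  rw [hk.integral_exp_apply_flow, Real.log_mul (Real.exp_pos _).ne' hne, Real.log_exp]
  ring

end IsAddCocycle

theorem Continuous.hasDerivAt_integral_add_left {E : Type*} [NormedAddCommGroup E]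
    [NormedSpace ℝ E] [CompleteSpace E] {f : ℝ → E} (hf : Continuous f) (r t : ℝ) :
    HasDerivAt (fun u => ∫ s in u..(r + u), f s) (f (r + t) - f t) t := by
  have hsplit : (fun u => ∫ s in u..(r + u), f s) =
      fun u => (∫ s in (0 : ℝ)..(r + u), f s) - ∫ s in (0 : ℝ)..u, f s := by
    funext u
    rw [intervalIntegral.integral_interval_sub_left (hf.intervalIntegrable _ _)
      (hf.intervalIntegrable _ _)]
  rw [hsplit]
  exact ((hf.integral_hasStrictDerivAt 0 (r + t)).hasDerivAt.comp_const_add r t).sub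
    (hf.integral_hasStrictDerivAt 0 t).hasDerivAt

theorem integral_exp_pos {g : ℝ → ℝ} (hg : Continuous g) {a b : ℝ} (hab : a < b) :
    0 < ∫ s in a..b, Real.exp (g s) :=
  intervalIntegral.intervalIntegral_pos_of_pos
    ((Real.continuous_exp.comp hg).intervalIntegrable a b) (fun _ => Real.exp_pos _) hab

theorem averaged_cocycle_general {X : Type*} (φ : ℝ → X → X)
    (k : ℝ → X → ℝ)
    (hcoc : ∀ (t t' : ℝ) (x : X), k (t + t') x = k t (φ t' x) + k t' x)
    (hcont : ∀ x : X, Continuous fun t : ℝ => k t x)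
    (r : ℝ) (hr : 0 < r)
    (K : ℝ → X → ℝ)
    (hK : ∀ (t : ℝ) (x : X), K t x =
      Real.log ((∫ s in t..(r + t), Real.exp (k s x)) /
        ∫ s in (0 : ℝ)..r, Real.exp (k s x))) :
    (∀ (t t' : ℝ) (x : X), K (t + t') x = K t (φ t' x) + K t' x) ∧
    (∀ x : X, HasDerivAt (fun t : ℝ => K t x)
      ((Real.exp (k r x) - Real.exp (k 0 x)) / ∫ s in (0 : ℝ)..r, Real.exp (k s x)) 0) := by
  have hk : IsAddCocycle φ k := hcoc
  set L : ℝ → X → ℝ := fun t x => Real.log (∫ s in t..(r + t), Real.exp (k s x))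
  have hpos (t : ℝ) (x : X) : 0 < ∫ s in t..(r + t), Real.exp (k s x) :=
    integral_exp_pos (hcont x) (by linarith)
  have hKL : K = fun t x => L t x - L 0 x := by
    funext t x
    rw [hK, Real.log_div (hpos t x).ne' (by simpa using (hpos 0 x).ne')]
    simp [L]
  have hLflow (t t' : ℝ) (x : X) : L t (φ t' x) = L (t + t') x - k t' x := by
    have := hk.log_integral_exp_apply_flow t (r + t) t' x
      (by rw [add_assoc]; exact (hpos (t + t') x).ne')
    rwa [add_assoc] at this
  refine ⟨hKL ▸ isAddCocycle_sub_apply_zero k hLflow, fun x => ?_⟩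
  have hlogF := ((Real.continuous_exp.comp (hcont x)).hasDerivAt_integral_add_left r 0).log
    (hpos 0 x).ne'
  simp only [add_zero, Function.comp_apply] at hlogF
  rw [hKL]
  exact hlogF.sub_const _

/-- given a continuous additive cocycle `k` over a flow `φ`,
the averaged function `K_t(x) = log(∫_t^{r+t} e^{k_s(x)} ds / ∫_0^r e^{k_s(x)} ds)`
is again an additive cocycle over `φ`, and its derivative in `t` at `t = 0` is
`(e^{k_r(x)} − e^{k_0(x)}) / ∫_0^r e^{k_s(x)} ds`. -/
theorem averaged_cocycle {X : Type*} (φ : ℝ → X → X)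
    (hflow : ∀ (t s : ℝ) (x : X), φ t (φ s x) = φ (t + s) x)
    (k : ℝ → X → ℝ)
    (hcoc : ∀ (t t' : ℝ) (x : X), k (t + t') x = k t (φ t' x) + k t' x)
    (hcont : ∀ x : X, Continuous fun t : ℝ => k t x)
    (r : ℝ) (hr : 0 < r)
    (K : ℝ → X → ℝ)
    (hK : ∀ (t : ℝ) (x : X), K t x =
      Real.log ((∫ s in t..(r + t), Real.exp (k s x)) /
        ∫ s in (0 : ℝ)..r, Real.exp (k s x))) :
    (∀ (t t' : ℝ) (x : X), K (t + t') x = K t (φ t' x) + K t' x) ∧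
    (∀ x : X, HasDerivAt (fun t : ℝ => K t x)
      ((Real.exp (k r x) - Real.exp (k 0 x)) / ∫ s in (0 : ℝ)..r, Real.exp (k s x)) 0) :=
  averaged_cocycle_general φ k hcoc hcont r hr K hK
end
end
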